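/- Let n be an odd squarefree positive integer. Then ∑_{κ=0}^{n−1} 2^{ω(gcd(n,κ))} · ∏_{p prime, p ∣ n} (1 − (−κ/p)·p⁻¹) = ∏_{p prime, p ∣ n} (p + 1), where (−κ/p) denotes the Legendre symbol and the identity is an identity of rational numbers. -/
import Mathlib


/-- The Legendre symbol `(a/p)`, extended by `0` off the primes. -/
noncomputable def legSym (p : ℕ) (a : ℤ) : ℤ :=
  if hp : p.Prime then @legendreSym p ⟨hp⟩ a else 0

/-- The local factor at a prime `p`. -/
noncomputable def fp (p κ : ℕ) : ℚ :=
  (if p ∣ κ then 2 else 1) * (1 - (legSym p (-(κ : ℤ)) : ℚ) * ((p : ℚ))⁻¹)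

lemma fp_mod {p : ℕ} (hp : p.Prime) (κ : ℕ) : fp p (κ % p) = fp p κ := by
  haveI : Fact p.Prime := ⟨hp⟩
  have h1 : (p ∣ κ % p) ↔ (p ∣ κ) := Nat.dvd_mod_iff dvd_rfl
  have h2 : legendreSym p (-((κ % p : ℕ) : ℤ)) = legendreSym p (-(κ : ℤ)) := by
    simp only [legendreSym]
    congr 1
    push_cast
    rfl
  simp only [fp, legSym, dif_pos hp, h1, h2]

lemma crt_sum {a b : ℕ} (ha : a ≠ 0) (hb : b ≠ 0) (hab : a.Coprime b)
    (A B : ℕ → ℚ) (hA : ∀ κ, A (κ % a) = A κ) (hB : ∀ κ, B (κ % b) = B κ) :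
    ∑ κ ∈ Finset.range (a * b), A κ * B κ =
      (∑ i ∈ Finset.range a, A i) * (∑ j ∈ Finset.range b, B j) := by
  rw [Finset.sum_mul_sum, ← Finset.sum_product']
  refine Finset.sum_bij' (fun κ _ => ((κ % a, κ % b) : ℕ × ℕ))
      (fun x _ => (Nat.chineseRemainder hab x.1 x.2 : ℕ) % (a * b)) ?_ ?_ ?_ ?_ ?_
  · intro κ hκ
    simp only [Finset.mem_product, Finset.mem_range]
    exact ⟨Nat.mod_lt _ (Nat.pos_of_ne_zero ha), Nat.mod_lt _ (Nat.pos_of_ne_zero hb)⟩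
  · intro x hx
    simp only [Finset.mem_range]
    exact Nat.mod_lt _ (Nat.pos_of_ne_zero (mul_ne_zero ha hb))
  · intro κ hκ
    simp only [Finset.mem_range] at hκ
    have h := Nat.chineseRemainder_modEq_unique hab
      (Nat.mod_modEq κ a).symm (Nat.mod_modEq κ b).symm
    have h2 : κ % (a * b) = (Nat.chineseRemainder hab (κ % a) (κ % b) : ℕ) % (a * b) := h
    show (Nat.chineseRemainder hab (κ % a) (κ % b) : ℕ) % (a * b) = κ
    rw [← h2, Nat.mod_eq_of_lt hκ]
  · intro x hx
    simp only [Finset.mem_product, Finset.mem_range] at hx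
    have h1 := (Nat.chineseRemainder hab x.1 x.2).2.1
    have h2 := (Nat.chineseRemainder hab x.1 x.2).2.2
    have e1 : (Nat.chineseRemainder hab x.1 x.2 : ℕ) % (a * b) % a = x.1 := by
      rw [Nat.mod_mod_of_dvd _ (dvd_mul_right a b)]
      rw [show (Nat.chineseRemainder hab x.1 x.2 : ℕ) % a = x.1 % a from h1,
        Nat.mod_eq_of_lt hx.1]
    have e2 : (Nat.chineseRemainder hab x.1 x.2 : ℕ) % (a * b) % b = x.2 := by
      rw [Nat.mod_mod_of_dvd _ (dvd_mul_left b a)]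
      rw [show (Nat.chineseRemainder hab x.1 x.2 : ℕ) % b = x.2 % b from h2,
        Nat.mod_eq_of_lt hx.2]
    exact Prod.ext e1 e2
  · intro κ hκ
    rw [hA, hB]

lemma sum_legendre_neg (p : ℕ) (hp : p.Prime) (h2 : p ≠ 2) :
    ∑ κ ∈ Finset.range p, (@legendreSym p ⟨hp⟩ (-(κ : ℤ))) = 0 := by
  haveI : Fact p.Prime := ⟨hp⟩
  haveI : NeZero p := ⟨hp.ne_zero⟩
  have key : ∑ κ ∈ Finset.range p, (@legendreSym p ⟨hp⟩ (-(κ : ℤ)))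
      = ∑ x : ZMod p, quadraticChar (ZMod p) x := by
    refine Finset.sum_bij' (fun κ _ => (-(κ : ZMod p)))
        (fun x _ => ((-x : ZMod p)).val) (fun _ _ => Finset.mem_univ _) ?_ ?_ ?_ ?_
    · intro x _
      exact Finset.mem_range.mpr (ZMod.val_lt _)
    · intro κ hκ
      simp only [neg_neg]
      rw [ZMod.val_natCast_of_lt (Finset.mem_range.mp hκ)]
    · intro x _
      simp [ZMod.natCast_val, ZMod.cast_id]
    · intro κ _
      simp only [legendreSym]
      congr 1
      push_cast
      ring
  rw [key, quadraticChar_sum_zero]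
  rw [ZMod.ringChar_zmod_n]
  exact h2

lemma prime_sum (p : ℕ) (hp : p.Prime) (h2 : p ≠ 2) :
    ∑ κ ∈ Finset.range p, fp p κ = (p : ℚ) + 1 := by
  haveI : Fact p.Prime := ⟨hp⟩
  have hsplit : ∀ κ, fp p κ =
      (1 - (legSym p (-(κ : ℤ)) : ℚ) * ((p : ℚ))⁻¹) + (if p ∣ κ then 1 else 0) := by
    intro κ
    by_cases h : p ∣ κ
    · have hz : legSym p (-(κ : ℤ)) = 0 := by
        simp only [legSym, dif_pos hp]
        rw [legendreSym.eq_zero_iff]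
        push_cast
        simp [(ZMod.natCast_eq_zero_iff κ p).mpr h]
      simp [fp, h, hz]
      norm_num
    · simp [fp, h]
  simp only [hsplit]
  rw [Finset.sum_add_distrib]
  have hfilter : (Finset.range p).filter (fun κ => p ∣ κ) = {0} := by
    ext κ
    simp only [Finset.mem_filter, Finset.mem_range, Finset.mem_singleton]
    constructor
    · rintro ⟨h1, h2⟩; exact Nat.eq_zero_of_dvd_of_lt h2 h1
    · rintro rfl; exact ⟨hp.pos, dvd_zero p⟩
  have hcount : (∑ κ ∈ Finset.range p, (if p ∣ κ then (1 : ℚ) else 0)) = 1 := by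
    rw [Finset.sum_ite, hfilter]
    simp
  rw [hcount]
  have hmain : ∑ κ ∈ Finset.range p, (1 - (legSym p (-(κ : ℤ)) : ℚ) * ((p : ℚ))⁻¹)
      = (p : ℚ) := by
    have hz : (∑ κ ∈ Finset.range p, ((legSym p (-(κ : ℤ))) : ℚ)) = 0 := by
      have := sum_legendre_neg p hp h2
      simp only [legSym, dif_pos hp]
      exact_mod_cast congrArg (fun z : ℤ => (z : ℚ)) this
    rw [Finset.sum_sub_distrib, Finset.sum_const, Finset.card_range, ← Finset.sum_mul, hz]
    simp
  rw [hmain]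

lemma main_aux (S : Finset ℕ) (hS : ∀ p ∈ S, p.Prime ∧ p ≠ 2) :
    ∑ κ ∈ Finset.range (∏ p ∈ S, p), ∏ p ∈ S, fp p κ = ∏ p ∈ S, ((p : ℚ) + 1) := by
  induction S using Finset.induction with
  | empty => simp
  | @insert q S hq ih =>
    have hqS := hS q (Finset.mem_insert_self q S)
    have hS' : ∀ p ∈ S, p.Prime ∧ p ≠ 2 := fun p hp =>
      hS p (Finset.mem_insert_of_mem hp)
    have hm0 : (∏ p ∈ S, p) ≠ 0 := by
      apply Finset.prod_ne_zero_iff.mpr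
      intro p hp; exact (hS' p hp).1.ne_zero
    have hcop : q.Coprime (∏ p ∈ S, p) := by
      apply Nat.Coprime.prod_right
      intro p hp
      exact (Nat.coprime_primes hqS.1 (hS' p hp).1).mpr (fun h => hq (h ▸ hp))
    rw [Finset.prod_insert hq]
    have step : ∑ κ ∈ Finset.range (q * ∏ p ∈ S, p), ∏ p ∈ insert q S, fp p κ
        = (∑ i ∈ Finset.range q, fp q i) *
          (∑ j ∈ Finset.range (∏ p ∈ S, p), ∏ p ∈ S, fp p j) := by
      have := crt_sum hqS.1.ne_zero hm0 hcop (fp q) (fun κ => ∏ p ∈ S, fp p κ)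
        (fun κ => fp_mod hqS.1 κ)
        (fun κ => by
          apply Finset.prod_congr rfl
          intro p hp
          have hdvd : p ∣ ∏ r ∈ S, r := Finset.dvd_prod_of_mem _ hp
          rw [← fp_mod (hS' p hp).1 (κ % ∏ r ∈ S, r),
            Nat.mod_mod_of_dvd _ hdvd, fp_mod (hS' p hp).1])
      rw [← this]
      apply Finset.sum_congr rfl
      intro κ _
      rw [Finset.prod_insert hq]
    rw [step, prime_sum q hqS.1 hqS.2, ih hS', Finset.prod_insert hq]

/-- For odd squarefree `n`:
`∑_{κ=0}^{n-1} 2^{ω(gcd(n,κ))} ∏_{p ∣ n} (1 - (-κ/p)/p) = ∏_{p ∣ n} (p+1)`. -/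
theorem kappa_sum_identity (n : ℕ) (hn : 0 < n) (hodd : Odd n) (hsq : Squarefree n) :
    ∑ κ ∈ Finset.range n,
        (2 : ℚ) ^ (Nat.gcd n κ).primeFactors.card *
          ∏ p ∈ n.primeFactors, (1 - (legSym p (-(κ : ℤ)) : ℚ) * ((p : ℚ))⁻¹) =
      ∏ p ∈ n.primeFactors, ((p : ℚ) + 1) := by
  have hS : ∀ p ∈ n.primeFactors, p.Prime ∧ p ≠ 2 := by
    intro p hp
    refine ⟨Nat.prime_of_mem_primeFactors hp, ?_⟩
    rintro rfl
    have hd := Nat.dvd_of_mem_primeFactors hp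
    have h1 := Nat.odd_iff.mp hodd
    have h0 := Nat.even_iff.mp ((even_iff_two_dvd).mpr hd)
    omega
  have key : ∀ κ, (2 : ℚ) ^ (Nat.gcd n κ).primeFactors.card *
      ∏ p ∈ n.primeFactors, (1 - (legSym p (-(κ : ℤ)) : ℚ) * ((p : ℚ))⁻¹)
      = ∏ p ∈ n.primeFactors, fp p κ := by
    intro κ
    have hfac : (Nat.gcd n κ).primeFactors = n.primeFactors.filter (· ∣ κ) := by
      ext p
      simp only [Nat.mem_primeFactors, Finset.mem_filter]
      constructor
      · rintro ⟨hp, hd, _⟩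
        exact ⟨⟨hp, (Nat.dvd_gcd_iff.mp hd).1, hn.ne'⟩, (Nat.dvd_gcd_iff.mp hd).2⟩
      · rintro ⟨⟨hp, hd, _⟩, hdk⟩
        exact ⟨hp, Nat.dvd_gcd hd hdk, fun h => hn.ne' (Nat.eq_zero_of_gcd_eq_zero_left h)⟩
    have hpow : (2 : ℚ) ^ (Nat.gcd n κ).primeFactors.card
        = ∏ p ∈ n.primeFactors, (if p ∣ κ then (2 : ℚ) else 1) := by
      rw [hfac, Finset.prod_ite, Finset.prod_const, Finset.prod_const, one_pow, mul_one]
    rw [hpow, ← Finset.prod_mul_distrib]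
    rfl
  simp only [key]
  have hprod : ∏ p ∈ n.primeFactors, p = n := Nat.prod_primeFactors_of_squarefree hsq
  have h := main_aux n.primeFactors hS
  rw [hprod] at h
  exact h
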